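/- arXiv:1404.1547 — 2 statements merged into one kernel-verified Lean document; each statement's English description precedes it below -/
import Mathlib

section
/- As a → 0⁺, the quantity γ(a) := ∫₀^∞ [1 + a(e^t − 1)^{2/α}]^{-1} dt satisfies γ(a) ≥ (1 + o(1))·log(1 + a^{-α/2}); i.e., liminf_{a→0⁺} γ(a)/log(1 + a^{-α/2}) ≥ 1. -/
open Real MeasureTheory Set Filter

lemma f_integrable (α a : ℝ) (hα : 2 < α) (ha : 0 < a) :
    IntegrableOn (fun t : ℝ => (1 + a * (Real.exp t - 1) ^ (2 / α))⁻¹) (Ioi 0) := by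
  have hc : 0 < 2 / α := by positivity
  set c := 2 / α with hcdef
  -- dominating function
  have hdom : IntegrableOn (fun t : ℝ => ((2:ℝ) ^ c * (1 + a⁻¹)) * Real.exp (-c * t)) (Ioi 0) :=
    (exp_neg_integrableOn_Ioi 0 hc).const_mul _
  have hmeas : AEStronglyMeasurable (fun t : ℝ => (1 + a * (Real.exp t - 1) ^ c)⁻¹)
      (volume.restrict (Ioi 0)) := by
    apply ContinuousOn.aestronglyMeasurable _ measurableSet_Ioi
    apply ContinuousOn.inv₀
    · apply ContinuousOn.add continuousOn_const
      apply ContinuousOn.mul continuousOn_const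
      apply ContinuousOn.rpow_const (by fun_prop)
      intro t ht
      exact Or.inr (le_of_lt hc)
    · intro t ht
      have : 0 < Real.exp t - 1 := by
        simp only [mem_Ioi] at ht
        nlinarith [Real.add_one_lt_exp (ne_of_gt ht), ht]
      have := Real.rpow_pos_of_pos this c
      positivity
  refine hdom.mono' hmeas ?_
  rw [ae_restrict_iff' measurableSet_Ioi]
  filter_upwards [] with t ht
  simp only [mem_Ioi] at ht
  have het : 0 < Real.exp t - 1 := by nlinarith [Real.add_one_lt_exp (ne_of_gt ht)]
  have hpow : (0:ℝ) < (Real.exp t - 1) ^ c := Real.rpow_pos_of_pos het c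
  have hden : 0 < 1 + a * (Real.exp t - 1) ^ c := by positivity
  rw [Real.norm_eq_abs, abs_of_pos (inv_pos.mpr hden)]
  rcases le_or_gt (Real.log 2) t with h2 | h2
  · -- t ≥ log 2 : exp t ≥ 2
    have he2 : (2:ℝ) ≤ Real.exp t := by
      calc (2:ℝ) = Real.exp (Real.log 2) := (Real.exp_log (by norm_num)).symm
        _ ≤ Real.exp t := Real.exp_le_exp.mpr h2
    have hkey : Real.exp t / 2 ≤ Real.exp t - 1 := by linarith
    have h3 : (Real.exp t / 2) ^ c ≤ (Real.exp t - 1) ^ c :=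
      Real.rpow_le_rpow (by positivity) hkey (le_of_lt hc)
    have h4 : (Real.exp t / 2) ^ c = Real.exp (c * t) / (2:ℝ) ^ c := by
      rw [Real.div_rpow (le_of_lt (Real.exp_pos t)) (by norm_num)]
      congr 1
      rw [Real.rpow_def_of_pos (Real.exp_pos t), Real.log_exp, mul_comm]
    calc (1 + a * (Real.exp t - 1) ^ c)⁻¹ ≤ (a * (Real.exp t - 1) ^ c)⁻¹ := by
          apply inv_anti₀ (by positivity); linarith
      _ ≤ (a * (Real.exp (c * t) / (2:ℝ) ^ c))⁻¹ := by
          apply inv_anti₀ (by positivity)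
          apply mul_le_mul_of_nonneg_left _ (le_of_lt ha)
          rw [← h4]; exact h3
      _ = ((2:ℝ) ^ c * a⁻¹) * Real.exp (-c * t) := by
          rw [neg_mul, Real.exp_neg]
          field_simp
      _ ≤ ((2:ℝ) ^ c * (1 + a⁻¹)) * Real.exp (-c * t) := by
          have h2c : (0:ℝ) < (2:ℝ) ^ c := Real.rpow_pos_of_pos (by norm_num) c
          have : (0:ℝ) < Real.exp (-c * t) := Real.exp_pos _
          nlinarith [inv_pos.mpr ha]
  · -- t < log 2
    have h1 : (1 + a * (Real.exp t - 1) ^ c)⁻¹ ≤ 1 := by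
      rw [inv_le_one_iff₀]; right; nlinarith
    have h2c : (1:ℝ) ≤ (2:ℝ) ^ c := Real.one_le_rpow (by norm_num) (le_of_lt hc)
    have h3 : Real.exp (-c * Real.log 2) ≤ Real.exp (-c * t) := by
      apply Real.exp_le_exp.mpr; nlinarith
    have h4 : (2:ℝ) ^ c * Real.exp (-c * Real.log 2) = 1 := by
      rw [Real.rpow_def_of_pos (by norm_num : (0:ℝ) < 2), ← Real.exp_add]
      ring_nf
      exact Real.exp_zero
    have hexp : (0:ℝ) < Real.exp (-c * t) := Real.exp_pos _
    have h2cpos : (0:ℝ) < (2:ℝ) ^ c := by linarith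
    have hainv : (0:ℝ) < a⁻¹ := inv_pos.mpr ha
    calc (1 + a * (Real.exp t - 1) ^ c)⁻¹ ≤ 1 := h1
      _ = (2:ℝ) ^ c * Real.exp (-c * Real.log 2) := h4.symm
      _ ≤ (2:ℝ) ^ c * Real.exp (-c * t) := by nlinarith
      _ ≤ ((2:ℝ) ^ c * (1 + a⁻¹)) * Real.exp (-c * t) := by
          apply mul_le_mul_of_nonneg_right _ hexp.le
          nlinarith


lemma expInt_integrable (a c : ℝ) (ha : 0 < a) (hc : 0 < c) :
    IntegrableOn (fun t : ℝ => (1 + a * Real.exp (c * t))⁻¹) (Ioi 0) := by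
  have hcont : Continuous fun t : ℝ => (1 + a * Real.exp (c * t))⁻¹ := by
    apply Continuous.inv₀
    · continuity
    · intro t; positivity
  have hdom : IntegrableOn (fun t : ℝ => a⁻¹ * Real.exp (-c * t)) (Ioi 0) :=
    (exp_neg_integrableOn_Ioi 0 hc).const_mul _
  refine hdom.mono' hcont.aestronglyMeasurable ?_
  filter_upwards [] with t
  have h1 : 0 < 1 + a * Real.exp (c * t) := by positivity
  rw [Real.norm_eq_abs, abs_of_pos (inv_pos.mpr h1)]
  calc (1 + a * Real.exp (c * t))⁻¹ ≤ (a * Real.exp (c * t))⁻¹ := by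
        apply inv_anti₀ (by positivity); linarith
    _ = a⁻¹ * Real.exp (-c * t) := by rw [mul_inv, neg_mul, Real.exp_neg]

lemma expInt (a c : ℝ) (ha : 0 < a) (hc : 0 < c) :
    ∫ t in Ioi (0:ℝ), (1 + a * Real.exp (c * t))⁻¹
      = c⁻¹ * (Real.log (1 + a) - Real.log a) := by
  set F : ℝ → ℝ := fun t => t - c⁻¹ * Real.log (1 + a * Real.exp (c * t)) with hF
  have hFderiv : ∀ t ∈ Ioi (0:ℝ), HasDerivAt F ((1 + a * Real.exp (c * t))⁻¹) t := by
    intro t _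
    have h1 : 0 < 1 + a * Real.exp (c * t) := by positivity
    have hinner : HasDerivAt (fun t : ℝ => 1 + a * Real.exp (c * t)) (a * c * Real.exp (c * t)) t := by
      have := ((hasDerivAt_id t).const_mul c).exp
      simpa [mul_comm, mul_assoc, mul_left_comm] using (this.const_mul a).const_add 1
    have hlog := hinner.log (ne_of_gt h1)
    have := (hasDerivAt_id t).sub (hlog.const_mul c⁻¹)
    refine this.congr_deriv ?_
    field_simp
    ring
  have hFcont : ContinuousWithinAt F (Ici 0) 0 := by
    have : Continuous F :=
      continuous_id.sub (continuous_const.mul (Continuous.log (by continuity)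
        (fun x => by positivity)))
    exact this.continuousWithinAt
  have hFlim : Tendsto F atTop (nhds (-(c⁻¹ * Real.log a))) := by
    have hEq : ∀ t : ℝ, F t = -(c⁻¹ * Real.log (Real.exp (-(c * t)) + a)) := by
      intro t
      have he : 0 < Real.exp (-(c*t)) + a := by positivity
      have : (1 + a * Real.exp (c * t)) = Real.exp (c*t) * (Real.exp (-(c*t)) + a) := by
        rw [mul_add, ← Real.exp_add, add_neg_cancel, Real.exp_zero]; ring
      rw [hF]; simp only
      rw [this, Real.log_mul (Real.exp_ne_zero _) (ne_of_gt he), Real.log_exp]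
      field_simp
      ring
    rw [funext hEq] -- replace F
    have h1 : Tendsto (fun t : ℝ => Real.exp (-(c*t)) + a) atTop (nhds (0 + a)) := by
      apply Tendsto.add_const
      apply Real.tendsto_exp_atBot.comp
      exact tendsto_neg_atBot_iff.mpr (tendsto_id.const_mul_atTop hc)
    have h2 : Tendsto (fun t : ℝ => Real.log (Real.exp (-(c*t)) + a)) atTop (nhds (Real.log a)) := by
      have := (Real.continuousAt_log (by positivity)).tendsto.comp h1
      simpa [Function.comp_def] using this
    simpa using (h2.const_mul c⁻¹).neg
  have := integral_Ioi_of_hasDerivAt_of_tendsto hFcont hFderiv (expInt_integrable a c ha hc) hFlim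
  rw [this, hF]
  simp
  ring

lemma gamma_lower (α a : ℝ) (hα : 2 < α) (ha : 0 < a) :
    (2/α)⁻¹ * (Real.log (1+a) - Real.log a)
      ≤ ∫ t in Ioi (0:ℝ), (1 + a * (Real.exp t - 1) ^ (2 / α))⁻¹ := by
  have hc : 0 < 2 / α := by positivity
  rw [← expInt a (2/α) ha hc]
  apply setIntegral_mono_on (expInt_integrable a (2/α) ha hc)
    (f_integrable α a hα ha) measurableSet_Ioi
  intro t ht
  simp only [mem_Ioi] at ht
  have het : 0 < Real.exp t - 1 := by nlinarith [Real.add_one_lt_exp (ne_of_gt ht)]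
  have hpow : (0:ℝ) < (Real.exp t - 1) ^ (2/α) := Real.rpow_pos_of_pos het _
  apply inv_anti₀ (by positivity)
  have h1 : (Real.exp t - 1) ^ (2/α) ≤ Real.exp (2/α * t) := by
    have h2 : (Real.exp t - 1) ^ (2/α) ≤ (Real.exp t) ^ (2/α) :=
      Real.rpow_le_rpow het.le (by linarith) hc.le
    rwa [Real.rpow_def_of_pos (Real.exp_pos t), Real.log_exp, mul_comm] at h2
  have := mul_le_mul_of_nonneg_left h1 ha.le
  linarith

lemma gamma_upper (α a : ℝ) (hα : 2 < α) (ha : 0 < a) (ha1 : a < 1) :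
    (∫ t in Ioi (0:ℝ), (1 + a * (Real.exp t - 1) ^ (2 / α))⁻¹)
      ≤ (α/2) * (-Real.log a) + (2 + α/2) * Real.log 2 := by
  have hc : 0 < 2 / α := by positivity
  have hα0 : 0 < α := by linarith
  set c := 2 / α with hcdef
  set L := Real.log 2 with hLdef
  have hL : 0 < L := Real.log_pos (by norm_num)
  set a' := a * (2:ℝ) ^ (-c) with ha'def
  have h2c : (0:ℝ) < (2:ℝ) ^ (-c) := Real.rpow_pos_of_pos (by norm_num) _
  have ha' : 0 < a' := by positivity
  have ha'1 : a' ≤ 1 := by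
    have : (2:ℝ) ^ (-c) ≤ 1 :=
      Real.rpow_le_one_of_one_le_of_nonpos (by norm_num) (by linarith)
    nlinarith
  have hfint := f_integrable α a hα ha
  set f : ℝ → ℝ := fun t => (1 + a * (Real.exp t - 1) ^ c)⁻¹ with hfdef
  have hsplit : (∫ t in Ioi (0:ℝ), f t) = (∫ t in Ioc (0:ℝ) L, f t) + ∫ t in Ioi L, f t := by
    rw [← setIntegral_union (Ioc_disjoint_Ioi le_rfl) measurableSet_Ioi
      (hfint.mono_set Ioc_subset_Ioi_self) (hfint.mono_set (Ioi_subset_Ioi hL.le)),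
      Ioc_union_Ioi_eq_Ioi hL.le]
  have hb1 : (∫ t in Ioc (0:ℝ) L, f t) ≤ L := by
    have h0 : (∫ t in Ioc (0:ℝ) L, f t) ≤ ∫ _ in Ioc (0:ℝ) L, (1:ℝ) := by
      apply setIntegral_mono_on (hfint.mono_set Ioc_subset_Ioi_self)
        ((integrableOn_const_iff).mpr (Or.inr measure_Ioc_lt_top)) measurableSet_Ioc
      intro t ht
      have het : 0 < Real.exp t - 1 := by
        nlinarith [Real.add_one_lt_exp (ne_of_gt ht.1), ht.1]
      have hpow : (0:ℝ) < (Real.exp t - 1) ^ c := Real.rpow_pos_of_pos het _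
      rw [hfdef]
      simp only
      rw [inv_le_one_iff₀]
      right; nlinarith
    simpa [Real.volume_Ioc, hL.le] using h0
  have hb2 : (∫ t in Ioi L, f t) ≤ c⁻¹ * (Real.log (1 + a') - Real.log a') := by
    rw [← expInt a' c ha' hc]
    have step1 : (∫ t in Ioi L, f t) ≤ ∫ t in Ioi L, (1 + a' * Real.exp (c * t))⁻¹ := by
      apply setIntegral_mono_on (hfint.mono_set (Ioi_subset_Ioi hL.le))
        ((expInt_integrable a' c ha' hc).mono_set (Ioi_subset_Ioi hL.le)) measurableSet_Ioi
      intro t ht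
      simp only [mem_Ioi] at ht
      have ht0 : 0 < t := lt_trans hL ht
      have he2 : (2:ℝ) < Real.exp t := by
        calc (2:ℝ) = Real.exp L := (Real.exp_log (by norm_num)).symm
          _ < Real.exp t := Real.exp_lt_exp.mpr ht
      have het : 0 < Real.exp t - 1 := by linarith
      have hpow : (0:ℝ) < (Real.exp t - 1) ^ c := Real.rpow_pos_of_pos het _
      rw [hfdef]
      simp only
      apply inv_anti₀ (by positivity)
      have hkey : Real.exp t / 2 ≤ Real.exp t - 1 := by linarith
      have h3 : (Real.exp t / 2) ^ c ≤ (Real.exp t - 1) ^ c :=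
        Real.rpow_le_rpow (by positivity) hkey hc.le
      have h4 : (Real.exp t / 2) ^ c = Real.exp (c * t) * (2:ℝ) ^ (-c) := by
        rw [Real.div_rpow (Real.exp_pos t).le (by norm_num),
          Real.rpow_def_of_pos (Real.exp_pos t), Real.log_exp, mul_comm t c,
          Real.rpow_neg (by norm_num : (0:ℝ) ≤ 2), div_eq_mul_inv]
      have hfinal : a' * Real.exp (c * t) ≤ a * (Real.exp t - 1) ^ c := by
        have h5 := mul_le_mul_of_nonneg_left (h4 ▸ h3) ha.le
        calc a' * Real.exp (c * t) = a * (Real.exp (c * t) * (2:ℝ) ^ (-c)) := by ring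
          _ ≤ a * (Real.exp t - 1) ^ c := h5
      linarith
    have step2 : (∫ t in Ioi L, (1 + a' * Real.exp (c * t))⁻¹)
        ≤ ∫ t in Ioi (0:ℝ), (1 + a' * Real.exp (c * t))⁻¹ := by
      apply setIntegral_mono_set (expInt_integrable a' c ha' hc)
      · filter_upwards [] with t
        positivity
      · exact (Ioi_subset_Ioi hL.le).eventuallyLE
    linarith
  have hloga' : Real.log a' = Real.log a - c * L := by
    rw [ha'def, Real.log_mul (ne_of_gt ha) (ne_of_gt h2c),
      Real.log_rpow (by norm_num : (0:ℝ) < 2)]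
    ring
  have hlog1a' : Real.log (1 + a') ≤ L := by
    rw [hLdef]
    apply Real.log_le_log (by positivity)
    linarith
  have hcinv : c⁻¹ = α / 2 := by rw [hcdef, inv_div]
  have hcc : (α/2) * c = 1 := by rw [hcdef]; field_simp
  have hmain : c⁻¹ * (Real.log (1 + a') - Real.log a')
      ≤ (α/2) * (-Real.log a) + (1 + α/2) * L := by
    rw [hcinv, hloga']
    have h5 : (α/2) * (Real.log (1 + a')) ≤ (α/2) * L := by
      apply mul_le_mul_of_nonneg_left hlog1a' (by positivity)
    have h6 : (α/2) * (c * L) = L := by rw [← mul_assoc, hcc, one_mul]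
    nlinarith
  rw [hsplit]
  linarith

lemma lo_tendsto (α : ℝ) (hα : 2 < α) :
    Tendsto (fun a : ℝ => ((2/α)⁻¹ * (Real.log (1+a) - Real.log a)) / Real.log (1 + a ^ (-α/2)))
      (nhdsWithin 0 (Ioi 0)) (nhds 1) := by
  have hα0 : 0 < α := by linarith
  have hN : Tendsto (fun a : ℝ => (-Real.log a)⁻¹) (nhdsWithin 0 (Ioi 0)) (nhds 0) := by
    have h1 : Tendsto (fun a : ℝ => -Real.log a) (nhdsWithin 0 (Ioi 0)) atTop :=
      tendsto_neg_atBot_atTop.comp Real.tendsto_log_nhdsGT_zero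
    exact h1.inv_tendsto_atTop
  have hnum : Tendsto (fun a : ℝ => Real.log (1 + a)) (nhdsWithin 0 (Ioi 0)) (nhds 0) := by
    have h1 : ContinuousAt (fun a : ℝ => Real.log (1 + a)) 0 :=
      ContinuousAt.log (by fun_prop) (by norm_num)
    have h2 : Tendsto (fun a : ℝ => Real.log (1 + a)) (nhdsWithin 0 (Ioi 0))
        (nhds (Real.log (1 + 0))) := h1.tendsto.mono_left nhdsWithin_le_nhds
    simpa using h2
  have hu : Tendsto (fun a : ℝ => Real.log (1 + a) * (-Real.log a)⁻¹)
      (nhdsWithin 0 (Ioi 0)) (nhds 0) := by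
    simpa using hnum.mul hN
  have hr : Tendsto (fun a : ℝ => a ^ (α/2)) (nhdsWithin 0 (Ioi 0)) (nhds 0) := by
    have h1 : Tendsto (fun a : ℝ => Real.exp (Real.log a * (α/2)))
        (nhdsWithin 0 (Ioi 0)) (nhds 0) := by
      apply Real.tendsto_exp_atBot.comp
      exact Tendsto.atBot_mul_const (by positivity) Real.tendsto_log_nhdsGT_zero
    apply h1.congr'
    filter_upwards [self_mem_nhdsWithin] with a ha
    rw [Real.rpow_def_of_pos ha]
  have hnum2 : Tendsto (fun a : ℝ => Real.log (1 + a ^ (α/2))) (nhdsWithin 0 (Ioi 0)) (nhds 0) := by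
    have h1 : Tendsto (fun a : ℝ => 1 + a ^ (α/2)) (nhdsWithin 0 (Ioi 0)) (nhds 1) := by
      simpa using tendsto_const_nhds.add hr
    have h2 := (Real.continuousAt_log one_ne_zero).tendsto.comp h1
    simpa [Function.comp_def] using h2
  have hv : Tendsto (fun a : ℝ => (2/α) * (Real.log (1 + a ^ (α/2)) * (-Real.log a)⁻¹))
      (nhdsWithin 0 (Ioi 0)) (nhds 0) := by
    have := (hnum2.mul hN).const_mul (2/α)
    simpa using this
  have hmain : Tendsto (fun a : ℝ =>
      (1 + Real.log (1 + a) * (-Real.log a)⁻¹) /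
        (1 + (2/α) * (Real.log (1 + a ^ (α/2)) * (-Real.log a)⁻¹)))
      (nhdsWithin 0 (Ioi 0)) (nhds 1) := by
    have h1 := (tendsto_const_nhds (x := (1:ℝ)) (f := nhdsWithin (0:ℝ) (Ioi 0))).add hu
    have h2 := (tendsto_const_nhds (x := (1:ℝ)) (f := nhdsWithin (0:ℝ) (Ioi 0))).add hv
    have := h1.div h2 (by norm_num)
    simpa [Pi.div_def] using this
  apply hmain.congr'
  filter_upwards [Ioo_mem_nhdsGT_of_mem (by norm_num : (0:ℝ) ∈ Ico (0:ℝ) 1)] with a ha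
  obtain ⟨ha0, ha1⟩ := ha
  have hla : Real.log a < 0 := Real.log_neg ha0 ha1
  have hNpos : 0 < -Real.log a := by linarith
  have hrp : (0:ℝ) < a ^ (α/2) := Real.rpow_pos_of_pos ha0 _
  have hrn : (0:ℝ) < a ^ (-α/2) := Real.rpow_pos_of_pos ha0 _
  have hid : (1:ℝ) + a ^ (-α/2) = a ^ (-α/2) * (1 + a ^ (α/2)) := by
    rw [mul_add, mul_one, ← Real.rpow_add ha0]
    have he : -α/2 + α/2 = 0 := by ring
    rw [he, Real.rpow_zero]
    ring
  have hD : Real.log (1 + a ^ (-α/2)) = (α/2) * (-Real.log a) + Real.log (1 + a ^ (α/2)) := by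
    rw [hid, Real.log_mul (ne_of_gt hrn) (by positivity), Real.log_rpow ha0]
    ring
  have hlogpos : 0 ≤ Real.log (1 + a ^ (α/2)) := Real.log_nonneg (by linarith)
  have hdenpos : 0 < (α/2) * (-Real.log a) + Real.log (1 + a ^ (α/2)) := by positivity
  have hden2 : (0:ℝ) < 1 + (2/α) * (Real.log (1 + a ^ (α/2)) * (-Real.log a)⁻¹) := by positivity
  rw [hD, inv_div]
  rw [div_eq_div_iff (ne_of_gt hden2) (ne_of_gt hdenpos)]
  field_simp [hla.ne, hα0.ne']
  ring

theorem gamma_asymptotic_liminf (α : ℝ) (hα : 2 < α) :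
    1 ≤ Filter.liminf
      (fun a : ℝ =>
        (∫ t in Ioi (0 : ℝ), (1 + a * (Real.exp t - 1) ^ (2 / α))⁻¹) /
          Real.log (1 + a ^ (-α / 2)))
      (nhdsWithin 0 (Ioi 0)) := by
  have hα0 : 0 < α := by linarith
  have hev : ∀ᶠ a in nhdsWithin (0:ℝ) (Ioi 0),
      ((2/α)⁻¹ * (Real.log (1+a) - Real.log a)) / Real.log (1 + a ^ (-α/2)) ≤
      (∫ t in Ioi (0 : ℝ), (1 + a * (Real.exp t - 1) ^ (2 / α))⁻¹) /
          Real.log (1 + a ^ (-α / 2)) := by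
    filter_upwards [Ioo_mem_nhdsGT_of_mem (by norm_num : (0:ℝ) ∈ Ico (0:ℝ) 1)] with a ha
    obtain ⟨ha0, ha1⟩ := ha
    have hrn : (0:ℝ) < a ^ (-α/2) := Real.rpow_pos_of_pos ha0 _
    have hD : 0 < Real.log (1 + a ^ (-α/2)) := Real.log_pos (by linarith)
    gcongr
    exact gamma_lower α a hα ha0
  have hub : ∀ᶠ a in nhdsWithin (0:ℝ) (Ioi 0),
      (∫ t in Ioi (0 : ℝ), (1 + a * (Real.exp t - 1) ^ (2 / α))⁻¹) /
          Real.log (1 + a ^ (-α / 2)) ≤ 1 + (2 + α/2) * Real.log 2 := by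
    have hmem : Ioo (0:ℝ) (Real.exp (-(2/α))) ∈ nhdsWithin (0:ℝ) (Ioi 0) :=
      Ioo_mem_nhdsGT_of_mem ⟨le_refl 0, Real.exp_pos _⟩
    filter_upwards [hmem] with a ha
    obtain ⟨ha0, hae⟩ := ha
    have hexp1 : Real.exp (-(2/α)) < 1 := by
      rw [Real.exp_lt_one_iff, neg_lt_zero]
      positivity
    have ha1 : a < 1 := lt_trans hae hexp1
    have hlogb : 2/α ≤ -Real.log a := by
      have := Real.log_lt_log ha0 hae
      rw [Real.log_exp] at this
      linarith
    have hN1 : 1 ≤ (α/2) * (-Real.log a) := by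
      have h2 : (α/2) * (2/α) ≤ (α/2) * (-Real.log a) :=
        mul_le_mul_of_nonneg_left hlogb (by positivity)
      have h3 : (α/2) * (2/α) = 1 := by field_simp
      linarith
    have hNpos : (0:ℝ) < (α/2) * (-Real.log a) := by linarith
    have hγub := gamma_upper α a hα ha0 ha1
    have hrn : (0:ℝ) < a ^ (-α/2) := Real.rpow_pos_of_pos ha0 _
    have hDge : (α/2) * (-Real.log a) ≤ Real.log (1 + a ^ (-α/2)) := by
      have h1 : Real.log (a ^ (-α/2)) = (α/2) * (-Real.log a) := by
        rw [Real.log_rpow ha0]; ring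
      rw [← h1]
      exact Real.log_le_log hrn (by linarith)
    have hDpos : 0 < Real.log (1 + a ^ (-α/2)) := lt_of_lt_of_le hNpos hDge
    have hK : 0 ≤ (2 + α/2) * Real.log 2 :=
      mul_nonneg (by linarith) (Real.log_nonneg (by norm_num))
    calc (∫ t in Ioi (0 : ℝ), (1 + a * (Real.exp t - 1) ^ (2 / α))⁻¹) /
          Real.log (1 + a ^ (-α / 2))
        ≤ ((α/2) * (-Real.log a) + (2 + α/2) * Real.log 2) / Real.log (1 + a ^ (-α/2)) := by
          gcongr
      _ ≤ ((α/2) * (-Real.log a) + (2 + α/2) * Real.log 2) / ((α/2) * (-Real.log a)) :=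
          div_le_div_of_nonneg_left (by linarith) hNpos hDge
      _ = 1 + ((2 + α/2) * Real.log 2) / ((α/2) * (-Real.log a)) := by
          rw [add_div, div_self (ne_of_gt hNpos)]
      _ ≤ 1 + (2 + α/2) * Real.log 2 := by
          have := div_le_self hK hN1
          linarith
  have hlo := lo_tendsto α hα
  have hcb : IsCoboundedUnder (· ≥ ·) (nhdsWithin (0:ℝ) (Ioi 0))
      (fun a : ℝ =>
        (∫ t in Ioi (0 : ℝ), (1 + a * (Real.exp t - 1) ^ (2 / α))⁻¹) /
          Real.log (1 + a ^ (-α / 2))) :=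
    isCoboundedUnder_ge_of_eventually_le _ hub
  have hbd : IsBoundedUnder (· ≥ ·) (nhdsWithin (0:ℝ) (Ioi 0))
      (fun a : ℝ => ((2/α)⁻¹ * (Real.log (1+a) - Real.log a)) / Real.log (1 + a ^ (-α/2))) :=
    hlo.isBoundedUnder_ge
  calc (1:ℝ)
      = liminf (fun a : ℝ => ((2/α)⁻¹ * (Real.log (1+a) - Real.log a)) /
          Real.log (1 + a ^ (-α/2))) (nhdsWithin 0 (Ioi 0)) := hlo.liminf_eq.symm
    _ ≤ _ := liminf_le_liminf hev hbd hcb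
end

section
/- The profit-optimal BS density and spectrum amount in a sparse network are λ_b* = (b c_w λ_u² / (2 γ_α c_b²))^{1/3} and W* = (b c_b λ_u² / (2 γ_α c_w²))^{1/3}, obtained as the unique critical point of (λ_u b/2)(1 − λ_u/(Wλ_bγ_α)) − c_bλ_b − c_wW over λ_b, W > 0, and this critical point is a maximum. -/
private lemma cube_inj {a c : ℝ} (ha : 0 < a) (hc : 0 < c) (h : a^3 = c^3) : a = c := by
  nlinarith [sq_nonneg (a-c), sq_nonneg (a+c), mul_pos ha hc]

private lemma cube_root_cube {x : ℝ} (hx : 0 ≤ x) : (x ^ ((1:ℝ)/3)) ^ (3:ℕ) = x := by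
  rw [← Real.rpow_natCast (x ^ ((1:ℝ)/3)) 3, ← Real.rpow_mul hx]
  norm_num

theorem sparse_optimal_density_spectrum (b lu ga cb cw : ℝ)
    (hb : 0 < b) (hlu : 0 < lu) (hga : 0 < ga) (hcb : 0 < cb) (hcw : 0 < cw) :
    ∀ f : ℝ → ℝ → ℝ,
      (f = fun l W => lu * b / 2 * (1 - lu / (W * l * ga)) - cb * l - cw * W) →
      ∀ ls Ws : ℝ,
        ls = (b * cw * lu ^ 2 / (2 * ga * cb ^ 2)) ^ ((1 : ℝ) / 3) →
        Ws = (b * cb * lu ^ 2 / (2 * ga * cw ^ 2)) ^ ((1 : ℝ) / 3) →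
        (0 < ls ∧ 0 < Ws) ∧
        (∀ l W : ℝ, 0 < l → 0 < W →
          ((HasDerivAt (fun x => f x W) 0 l ∧ HasDerivAt (fun w => f l w) 0 W) ↔
            l = ls ∧ W = Ws)) ∧
        ∀ l W : ℝ, 0 < l → 0 < W → f l W ≤ f ls Ws := by
  intro f hf ls Ws hls hWs
  have hga0 : ga ≠ 0 := hga.ne'
  have hcb0 : cb ≠ 0 := hcb.ne'
  have hcw0 : cw ≠ 0 := hcw.ne'
  set K : ℝ := b * lu^2 / (2*ga) with hKdef
  have hK : 0 < K := by positivity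
  have hls_pos : 0 < ls := by rw [hls]; positivity
  have hWs_pos : 0 < Ws := by rw [hWs]; positivity
  have hls3 : ls ^ 3 = K * cw / cb ^ 2 := by
    rw [hls, cube_root_cube (by positivity), hKdef]
    field_simp
  have hWs3 : Ws ^ 3 = K * cb / cw ^ 2 := by
    rw [hWs, cube_root_cube (by positivity), hKdef]
    field_simp
  -- derivative helpers
  have hderiv1 : ∀ l W : ℝ, 0 < l → 0 < W →
      HasDerivAt (fun x => f x W) (K / (W * l^2) - cb) l := by
    intro l W hl hW
    have hne : W * l * ga ≠ 0 := by positivity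
    have h1 : HasDerivAt (fun x : ℝ => W * x * ga) (W * ga) l := by
      have := ((hasDerivAt_id l).const_mul W).mul_const ga
      simpa using this
    have h2 : HasDerivAt (fun x : ℝ => lu / (W * x * ga))
        ((0 * (W * l * ga) - lu * (W * ga)) / (W * l * ga)^2) l :=
      (hasDerivAt_const l lu).div h1 hne
    have h3 : HasDerivAt (fun x : ℝ => lu * b / 2 * (1 - lu / (W * x * ga)) - cb * x - cw * W)
        (lu * b / 2 * (0 - (0 * (W * l * ga) - lu * (W * ga)) / (W * l * ga)^2) - cb * 1 - 0) l := by
      exact (((((hasDerivAt_const l (1:ℝ)).sub h2).const_mul (lu * b / 2)).sub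
        ((hasDerivAt_id l).const_mul cb)).sub (hasDerivAt_const l (cw * W)))
    rw [hf]
    convert h3 using 1
    rw [hKdef]
    field_simp
    ring
  have hderiv2 : ∀ l W : ℝ, 0 < l → 0 < W →
      HasDerivAt (fun w => f l w) (K / (l * W^2) - cw) W := by
    intro l W hl hW
    have hne : W * l * ga ≠ 0 := by positivity
    have h1 : HasDerivAt (fun w : ℝ => w * l * ga) (l * ga) W := by
      have := ((hasDerivAt_id W).mul_const l).mul_const ga
      simpa using this
    have h2 : HasDerivAt (fun w : ℝ => lu / (w * l * ga))
        ((0 * (W * l * ga) - lu * (l * ga)) / (W * l * ga)^2) W :=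
      (hasDerivAt_const W lu).div h1 hne
    have h3 : HasDerivAt (fun w : ℝ => lu * b / 2 * (1 - lu / (w * l * ga)) - cb * l - cw * w)
        (lu * b / 2 * (0 - (0 * (W * l * ga) - lu * (l * ga)) / (W * l * ga)^2) - 0 - cw * 1) W := by
      exact (((((hasDerivAt_const W (1:ℝ)).sub h2).const_mul (lu * b / 2)).sub
        (hasDerivAt_const W (cb * l))).sub ((hasDerivAt_id W).const_mul cw))
    rw [hf]
    convert h3 using 1
    rw [hKdef]
    field_simp
    ring
  -- AM-GM setup
  set m : ℝ := (K * cb * cw) ^ ((1:ℝ)/3) with hmdef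
  have hm : 0 < m := by rw [hmdef]; positivity
  have hm3 : m ^ 3 = K * cb * cw := by rw [hmdef]; exact cube_root_cube (by positivity)
  have hcbls : cb * ls = m := by
    apply cube_inj (by positivity) hm
    rw [mul_pow, hls3, hm3]; field_simp
  have hcwWs : cw * Ws = m := by
    apply cube_inj (by positivity) hm
    rw [mul_pow, hWs3, hm3]; field_simp
  have hKls : K / (ls * Ws) = m := by
    apply cube_inj (by positivity) hm
    rw [div_pow, mul_pow, hls3, hWs3, hm3]; field_simp
  have hfln : ∀ l W : ℝ, 0 < l → 0 < W →
      f l W = lu * b / 2 - (K / (l * W) + cb * l + cw * W) := by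
    intro l W hl hW
    rw [hf, hKdef]
    have hl0 := hl.ne'
    have hW0 := hW.ne'
    field_simp
    ring
  refine ⟨⟨hls_pos, hWs_pos⟩, ?_, ?_⟩
  · intro l W hl hW
    constructor
    · rintro ⟨hd1, hd2⟩
      have e1 := hd1.unique (hderiv1 l W hl hW)
      have e2 := hd2.unique (hderiv2 l W hl hW)
      have e1' : K = cb * (W * l^2) := by
        have h : K / (W * l^2) = cb := by linarith
        rwa [div_eq_iff (by positivity)] at h
      have e2' : K = cw * (l * W^2) := by
        have h : K / (l * W^2) = cw := by linarith
        rwa [div_eq_iff (by positivity)] at h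
      have h5 : (l*W) * (cb*l) = (l*W) * (cw*W) := by linear_combination e2' - e1'
      have h6 : cb * l = cw * W := mul_left_cancel₀ (by positivity) h5
      constructor
      · apply cube_inj hl hls_pos
        rw [hls3]
        field_simp
        linear_combination l^2*cb*h6 + cw*e1'.symm
      · apply cube_inj hW hWs_pos
        rw [hWs3]
        field_simp
        linear_combination (-(W^2*cw))*h6 + cb*e2'.symm
    · rintro ⟨h1, h2⟩
      rw [h1, h2]
      constructor
      · have key : ls^2 * Ws = K / cb := by
          apply cube_inj (by positivity) (by positivity)
          rw [div_pow]
          have : (ls^2*Ws)^3 = (ls^3)^2 * Ws^3 := by ring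
          rw [this, hls3, hWs3]
          field_simp
        have hd := hderiv1 ls Ws hls_pos hWs_pos
        convert hd using 1
        rw [show Ws * ls^2 = ls^2 * Ws by ring, key]
        field_simp
        ring
      · have key : ls * Ws^2 = K / cw := by
          apply cube_inj (by positivity) (by positivity)
          rw [div_pow]
          have : (ls*Ws^2)^3 = ls^3 * (Ws^3)^2 := by ring
          rw [this, hls3, hWs3]
          field_simp
        have hd := hderiv2 ls Ws hls_pos hWs_pos
        convert hd using 1
        rw [key]
        field_simp
        ring
  · intro l W hl hW
    rw [hfln l W hl hW, hfln ls Ws hls_pos hWs_pos, hKls, hcbls, hcwWs]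
    have hx : (0:ℝ) ≤ K / (l * W) := by positivity
    have hy : (0:ℝ) ≤ cb * l := by positivity
    have hz : (0:ℝ) ≤ cw * W := by positivity
    have h := Real.geom_mean_le_arith_mean3_weighted (by norm_num : (0:ℝ) ≤ 1/3)
      (by norm_num : (0:ℝ) ≤ 1/3) (by norm_num : (0:ℝ) ≤ 1/3) hx hy hz (by norm_num)
    have hprod : (K / (l * W)) ^ ((1:ℝ)/3) * (cb * l) ^ ((1:ℝ)/3) * (cw * W) ^ ((1:ℝ)/3) = m := by
      rw [← Real.mul_rpow hx hy, ← Real.mul_rpow (by positivity) hz, hmdef]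
      congr 1
      field_simp
    rw [hprod] at h
    linarith
end
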